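/- arXiv:2506.18287 — 3 statements merged into one kernel-verified Lean document; each statement's English description precedes it below -/
import Mathlib

section
/- Let p be an odd prime and let x be a p-adic integer with m = ⟨x⟩_p < (p-1)/2, and set t = (x - m)/p ∈ ℤ_p. Then for every integer k with m + 1 ≤ k ≤ p - 1 - m, one has C(x,k)·C(x+k,k) ≡ (-1)^{m+k+1} · p·t · C(m+k,k) / ((k-m)·C(k,m)) · (1 + p·t·H_{m+k} - p·t·H_{k-m-1}) (mod p^3) in ℤ_p, where (k-m)·C(k,m) is a p-adic unit. -/
/-- Generalized binomial coefficient `C(x,k) = x(x-1)⋯(x-k+1)/k!` in `ℚ_[p]`. -/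
noncomputable def qchoose {p : ℕ} [Fact p.Prime] (x : ℚ_[p]) (k : ℕ) : ℚ_[p] :=
  (∏ i ∈ Finset.range k, (x - i)) / (k.factorial : ℚ_[p])

/-- The `n`-th harmonic number `H_n = ∑_{i=1}^n 1/i`, as an element of `ℚ_[p]`. -/
noncomputable def hNum (p : ℕ) [Fact p.Prime] (n : ℕ) : ℚ_[p] :=
  ∑ i ∈ Finset.range n, ((i : ℚ_[p]) + 1)⁻¹

/-!
Write `x = m + ε` with `ε = p t`. Then `k!² C(x,k) C(x+k,k) = ∏_{j=1-k}^{k} (x + j)`; its factor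
`j = -m` is `ε`, and the others are `n + ε` for the nonzero integers `-(k-m-1) ≤ n ≤ m+k`, all
`p`-adic units because `m + k < p`. To first order in `ε`, `∏ (n + ε) = ∏ n · (1 + ε ∑ 1/n)`,
with an error of size `‖ε‖² ≤ p⁻²` by the ultrametric inequality; here
`∏ n = (-1)^(k-m-1) (k-m-1)! (m+k)!` and `∑ 1/n = H_{m+k} - H_{k-m-1}`. The leading factor `ε`
supplies the third power of `p`.
-/

open Finset
open scoped Nat

theorem IsUltrametricDist.norm_prod_add_sub_le {K ι : Type*} [NormedField K]
    [IsUltrametricDist K] (s : Finset ι) {c : ι → K} (hc : ∀ i ∈ s, ‖c i‖ = 1) {ε : K} {r : ℝ}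
    (hε : ‖ε‖ ≤ r) (hr : r ≤ 1) :
    ‖∏ i ∈ s, (c i + ε) - (∏ i ∈ s, c i) * (1 + ε * ∑ i ∈ s, (c i)⁻¹)‖ ≤ r ^ 2 := by
  induction s using Finset.cons_induction with
  | empty => simp [sq_nonneg]
  | cons a s ha ih =>
    set C := ∏ i ∈ s, c i
    set S := ∑ i ∈ s, (c i)⁻¹
    have hc' : ∀ i ∈ s, ‖c i‖ = 1 := fun i hi => hc i (mem_cons_of_mem hi)
    have hca : ‖c a‖ = 1 := hc a (mem_cons_self a s)
    have hC : ‖C‖ = 1 := by rw [norm_prod]; exact prod_eq_one hc'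
    have hS : ‖S‖ ≤ 1 := norm_sum_le_of_forall_le_of_nonneg zero_le_one fun i hi => by
      rw [norm_inv, hc' i hi, inv_one]
    have hcaε : ‖c a + ε‖ ≤ 1 := (norm_add_le_max _ _).trans (max_le hca.le (hε.trans hr))
    have hinv : c a * (c a)⁻¹ = 1 := mul_inv_cancel₀ (norm_ne_zero_iff.mp (hca ▸ one_ne_zero))
    have key : (c a + ε) * ∏ i ∈ s, (c i + ε) - c a * C * (1 + ε * ((c a)⁻¹ + S)) =
        (c a + ε) * (∏ i ∈ s, (c i + ε) - C * (1 + ε * S)) + ε ^ 2 * (C * S) := by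
      linear_combination (-ε * C) * hinv
    rw [prod_cons, prod_cons, sum_cons, key]
    refine (norm_add_le_max _ _).trans (max_le ?_ ?_) <;> rw [norm_mul]
    · exact (mul_le_of_le_one_left (norm_nonneg _) hcaε).trans (ih hc')
    · rw [norm_mul, hC, one_mul, norm_pow]
      exact (mul_le_of_le_one_right (by positivity) hS).trans
        (pow_le_pow_left₀ (norm_nonneg _) hε 2)

section CommRing

variable {R : Type*} [CommRing R]

theorem prod_range_natCast_sub_add (n : ℕ) (ε : R) :
    ∏ i ∈ range n, ((n : R) - i + ε) = ∏ i ∈ range n, ((i : R) + 1 + ε) := by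
  induction n with
  | zero => simp
  | succ n ih =>
    rw [prod_range_succ', prod_range_succ, ← ih]
    congr 1
    · exact prod_congr rfl fun i _ => by push_cast; ring
    · push_cast; ring

theorem prod_range_sub_mul_prod_range_add_sub {m k : ℕ} (hmk : m < k) (x : R) :
    (∏ i ∈ range k, (x - i)) * ∏ i ∈ range k, (x + k - i) =
      (x - m) * ((∏ i ∈ range (m + k), ((i : R) + 1 + (x - m))) *
        ∏ j ∈ range (k - m - 1), (-((j : R) + 1) + (x - m))) := by
  obtain ⟨a, rfl⟩ : ∃ a, k = m + (a + 1) := ⟨k - m - 1, by omega⟩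
  have hlow : ∏ i ∈ range (m + (a + 1)), (x - i) =
      (∏ i ∈ range m, ((m : R) - i + (x - m))) *
        ((∏ j ∈ range a, (-((j : R) + 1) + (x - m))) * (x - m)) := by
    rw [prod_range_add, prod_range_succ']
    congr 1
    · exact prod_congr rfl fun i _ => by ring
    · congr 1
      exact prod_congr rfl fun j _ => by push_cast; ring
  have hhigh : ∏ i ∈ range (m + (m + (a + 1))), ((i : R) + 1 + (x - m)) =
      (∏ i ∈ range (m + (a + 1)), (x + ↑(m + (a + 1)) - i)) *
        ∏ i ∈ range m, ((m : R) - i + (x - m)) := by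
    rw [← prod_range_natCast_sub_add, add_comm m (m + (a + 1)), prod_range_add]
    congr 1
    · exact prod_congr rfl fun i _ => by push_cast; ring
    · exact prod_congr rfl fun i _ => by push_cast; ring
  rw [hlow, hhigh, show m + (a + 1) - m - 1 = a by omega]
  ring

end CommRing

theorem Nat.cast_choose_add_div_sub_mul_choose {K : Type*} [Field K] [CharZero K] {m k : ℕ}
    (hmk : m < k) :
    ((m + k).choose k : K) / (((k : K) - m) * k.choose m) = (m + k)! * (k - m - 1)! / k ! ^ 2 := by
  have hsub : (k : K) - m = ((k - m : ℕ) : K) := (Nat.cast_sub hmk.le).symm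
  have hsub0 : (k : K) - m ≠ 0 := by
    rw [hsub]
    exact Nat.cast_ne_zero.mpr (Nat.sub_pos_of_lt hmk).ne'
  have hchoose0 : (k.choose m : K) ≠ 0 := Nat.cast_ne_zero.mpr (Nat.choose_pos hmk.le).ne'
  have hfact0 : (k ! : K) ^ 2 ≠ 0 := pow_ne_zero 2 (Nat.cast_ne_zero.mpr (Nat.factorial_ne_zero k))
  rw [div_eq_div_iff (mul_ne_zero hsub0 hchoose0) hfact0, hsub, mul_comm _ (_ * _)]
  have hnat : (m + k).choose k * k ! ^ 2 * m ! =
      (k - m) * k.choose m * ((m + k)! * (k - m - 1)!) * m ! :=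
    calc (m + k).choose k * k ! ^ 2 * m ! = ((m + k).choose k * m ! * k !) * k ! := by ring
      _ = k.choose m * m ! * ((k - m) * (k - m - 1)!) * (m + k)! := by
        rw [Nat.add_choose_mul_factorial_mul_factorial, Nat.mul_factorial_pred (by omega),
          Nat.choose_mul_factorial_mul_factorial hmk.le]
        ring
      _ = _ := by ring
  exact_mod_cast Nat.eq_of_mul_eq_mul_right (Nat.factorial_pos m) hnat

namespace Padic

variable {p : ℕ} [Fact p.Prime]

theorem norm_natCast_eq_one_of_dvd_factorial {n N : ℕ} (hN : N < p) (hn : n ∣ N !) :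
    ‖(n : ℚ_[p])‖ = 1 := by
  rw [norm_natCast_eq_one_iff, Nat.Prime.coprime_iff_not_dvd Fact.out]
  exact fun hp => hN.not_ge ((Nat.Prime.dvd_factorial Fact.out).mp (hp.trans hn))

theorem norm_prod_range_add_mul_prod_range_neg_add_sub_le {a b : ℕ} (ha : a < p) (hb : b < p)
    {ε : ℚ_[p]} (hε : ‖ε‖ ≤ (p : ℝ)⁻¹) :
    ‖(∏ i ∈ range b, ((i : ℚ_[p]) + 1 + ε)) * ∏ j ∈ range a, (-((j : ℚ_[p]) + 1) + ε) -
        (-1) ^ a * a ! * b ! * (1 + ε * (hNum p b - hNum p a))‖ ≤ ((p : ℝ)⁻¹) ^ 2 := by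
  have hunit {n i : ℕ} (hn : n < p) (hi : i ∈ range n) : ‖(i : ℚ_[p]) + 1‖ = 1 := by
    exact_mod_cast norm_natCast_eq_one_of_dvd_factorial hn
      (Nat.dvd_factorial i.succ_pos (mem_range.mp hi))
  have hfact (n : ℕ) : ∏ i ∈ range n, ((i : ℚ_[p]) + 1) = n ! := by
    exact_mod_cast prod_range_add_one_eq_factorial n
  have key := IsUltrametricDist.norm_prod_add_sub_le ((range b).disjSum (range a))
    (c := Sum.elim (fun i : ℕ => (i : ℚ_[p]) + 1) (fun j => -((j : ℚ_[p]) + 1)))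
    (by
      rintro (i | j) hij
      · exact hunit hb (inl_mem_disjSum.mp hij)
      · rw [Sum.elim_inr, norm_neg]
        exact hunit ha (inr_mem_disjSum.mp hij))
    hε (inv_le_one_of_one_le₀ (mod_cast (Fact.out : p.Prime).one_le))
  simp only [prod_disjSum, sum_disjSum, Sum.elim_inl, Sum.elim_inr, prod_neg, card_range,
    inv_neg, sum_neg_distrib, hfact] at key
  refine (le_of_eq ?_).trans key
  congr 1
  simp only [hNum]
  ring

end Padic

theorem qchoose_mul_qchoose_add {p : ℕ} [Fact p.Prime] (x : ℚ_[p]) (k : ℕ) :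
    qchoose x k * qchoose (x + (k : ℚ_[p])) k =
      (∏ i ∈ range k, (x - i)) * (∏ i ∈ range k, (x + k - i)) / (k ! : ℚ_[p]) ^ 2 := by
  rw [qchoose, qchoose, div_mul_div_comm, sq]

theorem stmt3_general (p : ℕ) [Fact p.Prime] (x t : ℤ_[p]) (m : ℕ)
    (hx : x = (m : ℤ_[p]) + p * t) (k : ℕ)
    (hk1 : m + 1 ≤ k) (hk2 : k ≤ p - 1 - m) :
    ‖((k : ℚ_[p]) - (m : ℚ_[p])) * (k.choose m : ℚ_[p])‖ = 1 ∧
    ‖qchoose (x : ℚ_[p]) k * qchoose ((x : ℚ_[p]) + (k : ℚ_[p])) k -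
        (-1) ^ (m + k + 1) * (p : ℚ_[p]) * (t : ℚ_[p]) * ((m + k).choose k : ℚ_[p]) /
            (((k : ℚ_[p]) - (m : ℚ_[p])) * (k.choose m : ℚ_[p])) *
          (1 + (p : ℚ_[p]) * (t : ℚ_[p]) * hNum p (m + k)
            - (p : ℚ_[p]) * (t : ℚ_[p]) * hNum p (k - m - 1))‖
      ≤ (p : ℝ) ^ (-3 : ℤ) := by
  have hmk : m < k := hk1
  have hp : m + k < p := by omega
  have hunit {n : ℕ} (hn : n ∣ (m + k)!) : ‖(n : ℚ_[p])‖ = 1 :=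
    Padic.norm_natCast_eq_one_of_dvd_factorial hp hn
  have hk_dvd : k ! ∣ (m + k)! := Nat.factorial_dvd_factorial (by omega)
  have hchoose_dvd : k.choose m ∣ k ! :=
    ⟨m ! * (k - m)!, by rw [← mul_assoc, Nat.choose_mul_factorial_mul_factorial hmk.le]⟩
  refine ⟨?_, ?_⟩
  · rw [← Nat.cast_sub hmk.le, norm_mul, hunit (Nat.dvd_factorial (by omega) (by omega)),
      hunit (hchoose_dvd.trans hk_dvd), one_mul]
  set ε : ℚ_[p] := p * t
  have hε : ‖ε‖ ≤ (p : ℝ)⁻¹ := by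
    rw [norm_mul, Padic.norm_p, PadicInt.padic_norm_e_of_padicInt]
    exact mul_le_of_le_one_right (by positivity) (PadicInt.norm_le_one t)
  have hxm : (x : ℚ_[p]) - m = ε := by rw [hx]; push_cast; ring
  have hsign : (-1 : ℚ_[p]) ^ (m + k + 1) = (-1) ^ (k - m - 1) := by
    rw [show m + k + 1 = k - m - 1 + 2 * (m + 1) by omega, pow_add, pow_mul, neg_one_sq,
      one_pow, mul_one]
  have hcoef : (-1) ^ (m + k + 1) * (p : ℚ_[p]) * t * ((m + k).choose k : ℚ_[p]) /
        ((k - m) * k.choose m) =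
      ε / k ! ^ 2 * ((-1) ^ (k - m - 1) * (k - m - 1)! * (m + k)!) := by
    rw [mul_div_assoc, Nat.cast_choose_add_div_sub_mul_choose hmk, hsign, mul_assoc _ (p : ℚ_[p])]
    ring
  have hcore := Padic.norm_prod_range_add_mul_prod_range_neg_add_sub_le
    (a := k - m - 1) (by omega) hp hε
  rw [qchoose_mul_qchoose_add, prod_range_sub_mul_prod_range_add_sub hmk, hxm, hcoef]
  refine (le_of_eq ?_).trans ((mul_le_mul hε hcore (norm_nonneg _) (by positivity)).trans_eq ?_)
  · rw [show ‖ε‖ = ‖ε / k ! ^ 2‖ by rw [norm_div, norm_pow, hunit hk_dvd, one_pow, div_one],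
      ← norm_mul]
    congr 1
    ring
  · rw [zpow_neg, zpow_ofNat]
    ring

/-- Let `p` be an odd prime, `x` a `p`-adic integer with `m = ⟨x⟩_p < (p-1)/2` and
`t = (x - m)/p ∈ ℤ_p`. Then for `m + 1 ≤ k ≤ p - 1 - m`, `(k - m) C(k,m)` is a `p`-adic
unit and `C(x,k) C(x+k,k) ≡ (-1)^{m+k+1} p t C(m+k,k) / ((k-m) C(k,m)) ·
(1 + p t H_{m+k} - p t H_{k-m-1}) (mod p^3)`. -/
theorem stmt3 (p : ℕ) [Fact p.Prime] (hp : Odd p) (x t : ℤ_[p]) (m : ℕ)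
    (hm : m < (p - 1) / 2) (hx : x = (m : ℤ_[p]) + p * t) (k : ℕ)
    (hk1 : m + 1 ≤ k) (hk2 : k ≤ p - 1 - m) :
    ‖((k : ℚ_[p]) - (m : ℚ_[p])) * (k.choose m : ℚ_[p])‖ = 1 ∧
    ‖qchoose (x : ℚ_[p]) k * qchoose ((x : ℚ_[p]) + (k : ℚ_[p])) k -
        (-1) ^ (m + k + 1) * (p : ℚ_[p]) * (t : ℚ_[p]) * ((m + k).choose k : ℚ_[p]) /
            (((k : ℚ_[p]) - (m : ℚ_[p])) * (k.choose m : ℚ_[p])) *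
          (1 + (p : ℚ_[p]) * (t : ℚ_[p]) * hNum p (m + k)
            - (p : ℚ_[p]) * (t : ℚ_[p]) * hNum p (k - m - 1))‖
      ≤ (p : ℝ) ^ (-3 : ℤ) :=
  stmt3_general p x t m hx k hk1 hk2
end

section
/- Let p be an odd prime. For all integers j, k with 0 ≤ j, k ≤ p - 1, one has the exact identity of rational numbers ∑_{n=0}^{p-1} C(n,j)·C(n,k) = p · ∑_{n=0}^{j+k} (1/(n+1))·C(n,j)·C(j,n-k)·C(p-1,n). -/
/-!
Expanding `C(n,j) C(n,k)` by Vandermonde's identity writes it as a fixed combination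
`∑ₘ C(m,j) C(j,m-k) C(n,m)` of the binomials `C(n,m)`, with coefficients independent of `n`.
Summing over `n < p` turns each `C(n,m)` into `C(p,m+1)` (hockey stick), and
`(m+1) C(p,m+1) = p C(p-1,m)` brings out the factor `p`.
-/

/-- Binomial coefficient `C(a,b)` for `a : ℕ` and an integer `b`, which vanishes
when `b < 0` or `b > a`. -/
def zchoose (a : ℕ) (b : ℤ) : ℕ := if 0 ≤ b then a.choose b.toNat else 0

open Finset

lemma zchoose_natCast (a n : ℕ) : zchoose a n = a.choose n := by
  simp [zchoose]

lemma zchoose_self_sub (a : ℕ) (b : ℤ) : zchoose a (a - b) = zchoose a b := by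
  unfold zchoose
  split_ifs
  · rw [show (a - b).toNat = a - b.toNat by omega, Nat.choose_symm (by omega)]
  · rw [Nat.choose_eq_zero_of_lt (by omega)]
  · rw [Nat.choose_eq_zero_of_lt (by omega)]
  · rfl

lemma sum_range_choose_eq_choose_succ (p m : ℕ) :
    ∑ n ∈ range p, n.choose m = p.choose (m + 1) := by
  induction p with
  | zero => simp
  | succ p ih => rw [sum_range_succ, ih, Nat.choose_succ_succ, Nat.add_comm]

lemma add_one_mul_choose_add_one (p m : ℕ) :
    (m + 1) * p.choose (m + 1) = p * (p - 1).choose m := by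
  cases p with
  | zero => simp
  | succ p => rw [Nat.add_one_sub_one, Nat.add_one_mul_choose_eq, Nat.mul_comm]

lemma choose_mul_choose_eq_sum (n j k : ℕ) :
    n.choose j * n.choose k =
      ∑ m ∈ range (j + k + 1), m.choose j * zchoose j ((m : ℤ) - k) * n.choose m := by
  have hvandermonde : n.choose j * n.choose k =
      n.choose j * ∑ t ∈ range (k + 1), (n - j).choose t * j.choose (k - t) := by
    rcases le_or_gt j n with hjn | hnj
    · have h := Nat.add_choose_eq (n - j) j k
      rw [Nat.sub_add_cancel hjn, Nat.sum_antidiagonal_eq_sum_range_succ_mk] at h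
      rw [h]
    · simp [Nat.choose_eq_zero_of_lt hnj]
  have hterm (t : ℕ) (ht : t ≤ k) :
      (j + t).choose j * zchoose j (((j + t : ℕ) : ℤ) - k) * n.choose (j + t) =
        n.choose j * ((n - j).choose t * j.choose (k - t)) := by
    have hz : zchoose j (((j + t : ℕ) : ℤ) - k) = j.choose (k - t) := by
      rw [← zchoose_natCast, ← zchoose_self_sub]
      congr 1
      omega
    have hsubset := Nat.choose_mul (n := n) (Nat.le_add_right j t)
    rw [Nat.add_sub_cancel_left] at hsubset
    rw [hz, ← mul_assoc, ← hsubset]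
    ring
  have hlow : ∑ m ∈ range j, m.choose j * zchoose j ((m : ℤ) - k) * n.choose m = 0 :=
    sum_eq_zero fun m hm => by rw [Nat.choose_eq_zero_of_lt (mem_range.mp hm), zero_mul, zero_mul]
  rw [hvandermonde, mul_sum, show j + k + 1 = j + (k + 1) by omega, sum_range_add _ j, hlow,
    zero_add]
  exact sum_congr rfl fun t ht => (hterm t (Nat.lt_succ_iff.mp (mem_range.mp ht))).symm

lemma sum_range_choose_mul_choose (p j k : ℕ) :
    ∑ n ∈ range p, n.choose j * n.choose k =
      ∑ m ∈ range (j + k + 1), m.choose j * zchoose j ((m : ℤ) - k) * p.choose (m + 1) := by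
  simp only [choose_mul_choose_eq_sum, ← sum_range_choose_eq_choose_succ, mul_sum]
  exact sum_comm

theorem stmt11_general (p : ℕ) (j k : ℕ) :
    ∑ n ∈ Finset.range p, (n.choose j : ℚ) * (n.choose k : ℚ) =
      (p : ℚ) * ∑ n ∈ Finset.range (j + k + 1),
        (1 / ((n : ℚ) + 1)) * (n.choose j : ℚ) * (zchoose j ((n : ℤ) - k) : ℚ) *
          ((p - 1).choose n : ℚ) := by
  have hsum := congrArg (Nat.cast : ℕ → ℚ) (sum_range_choose_mul_choose p j k)
  push_cast at hsum
  rw [hsum, mul_sum]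
  refine sum_congr rfl fun m _ => ?_
  have habsorb : ((m : ℚ) + 1) * p.choose (m + 1) = p * (p - 1).choose m := by
    exact_mod_cast add_one_mul_choose_add_one p m
  field_simp
  linear_combination (m.choose j * zchoose j ((m : ℤ) - k) : ℚ) * habsorb

/-- Let `p` be an odd prime. For all `0 ≤ j, k ≤ p - 1`, one has the identity of rationals
`∑_{n=0}^{p-1} C(n,j) C(n,k) = p ∑_{n=0}^{j+k} (1/(n+1)) C(n,j) C(j,n-k) C(p-1,n)`. -/
theorem stmt11 (p : ℕ) (hp : p.Prime) (hodd : Odd p) (j k : ℕ)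
    (hj : j ≤ p - 1) (hk : k ≤ p - 1) :
    ∑ n ∈ Finset.range p, (n.choose j : ℚ) * (n.choose k : ℚ) =
      (p : ℚ) * ∑ n ∈ Finset.range (j + k + 1),
        (1 / ((n : ℚ) + 1)) * (n.choose j : ℚ) * (zchoose j ((n : ℤ) - k) : ℚ) *
          ((p - 1).choose n : ℚ) :=
  stmt11_general p j k
end

section
/- Let p be an odd prime and let m be a nonnegative integer with m < (p-1)/2. Then ∑_{k=m+1}^{p-m-1} C(m+k,k)/(k-m) ≡ 0 (mod p), as a congruence of p-integral rational numbers. -/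
/-!
Put `f(x) = (x + 1)(x + 2) ⋯ (x + m) = m! · C(x + m, m)`. Over a finite field with `q > 2`
elements, a polynomial `f` of degree `< q` satisfies `∑ₓ f(x) / (x - a) = -f'(a)`, because the
power sums `∑ₓ xⁱ` vanish for `i < q - 1`. Take `a = m` in `ZMod p` and let `k` run over
`0, …, p - 1`: the terms with `k ≥ p - m` vanish since `p ∣ C(m + k, m)`, the term `k = m` is
`0 / 0 = 0`, the terms `m < k < p - m` add up to `m!` times the sum in question, and the terms
`k < m` add up to `-m! · C(2m, m) ∑_{k<m} 1 / (m + k + 1) = -f'(m)` by the identity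
`∑_{k<n} C(m + k, m) / (n - k) = C(m + n, m) ∑_{k<n} 1 / (m + k + 1)`,
valid in every field where `(m + n)! ≠ 0` and proved by a double induction along Pascal's rule.
So the sum vanishes in `ZMod p`; as its denominators are prime to `p`, the rational sum then has
`p`-adic norm at most `1 / p`.
-/

open Finset Polynomial
open scoped Nat

namespace FiniteField

variable {F : Type*} [Field F] [Fintype F]

theorem sum_eval_eq_zero_of_natDegree_lt (f : F[X]) (hf : f.natDegree < Fintype.card F - 1) :
    ∑ x, f.eval x = 0 := by
  simp_rw [eval_eq_sum_range]
  rw [sum_comm]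
  refine sum_eq_zero fun i hi => ?_
  rw [← mul_sum, sum_pow_lt_card_sub_one F i (by simp only [mem_range] at hi; omega), mul_zero]

theorem sum_inv_sub_eq_zero (hF : 2 < Fintype.card F) (a : F) : ∑ x, (x - a)⁻¹ = 0 :=
  calc ∑ x, (x - a)⁻¹ = ∑ y : F, y⁻¹ := (Equiv.subRight a).sum_comp (·⁻¹)
    _ = ∑ y : F, y ^ 1 := by simpa using Equiv.sum_comp (Equiv.inv F) id
    _ = 0 := sum_pow_lt_card_sub_one F 1 (by omega)

theorem sum_eval_div_sub_eq_neg_derivative_eval (hF : 2 < Fintype.card F) (f : F[X])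
    (hf : f.natDegree < Fintype.card F) (a : F) :
    ∑ x, f.eval x / (x - a) = -(derivative f).eval a := by
  classical
  set g := f /ₘ (X - C a)
  have hfg : (X - C a) * g + C (f.eval a) = f := by
    rw [add_comm, ← modByMonic_X_sub_C_eq_C_eval]
    exact modByMonic_add_div f _
  have hg : g.natDegree < Fintype.card F - 1 := by
    rw [natDegree_divByMonic f (monic_X_sub_C a), natDegree_X_sub_C]
    omega
  have hfx : ∀ x, f.eval x = (x - a) * g.eval x + f.eval a := fun x => by
    conv_lhs => rw [← hfg]
    simp
  have hterm : ∀ x, f.eval x / (x - a) =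
      f.eval a * (x - a)⁻¹ + g.eval x - if x = a then g.eval a else 0 := by
    intro x
    by_cases hx : x = a
    · simp [hx]
    · have hxa : x - a ≠ 0 := sub_ne_zero.mpr hx
      rw [if_neg hx, hfx, sub_zero]
      field_simp
      ring
  have hderiv : (derivative f).eval a = g.eval a := by
    rw [← hfg]
    simp
  simp_rw [hterm, sum_sub_distrib, sum_add_distrib, ← mul_sum, sum_inv_sub_eq_zero hF,
    sum_eval_eq_zero_of_natDegree_lt g hg, sum_ite_eq', mem_univ, if_true, hderiv]
  ring

end FiniteField

theorem ZMod.sum_univ_eq_sum_range {M : Type*} [AddCommMonoid M] (n : ℕ) [NeZero n]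
    (f : ZMod n → M) : ∑ x, f x = ∑ k ∈ range n, f k :=
  sum_nbij' ZMod.val Nat.cast (fun x _ => mem_range.mpr (ZMod.val_lt x)) (fun _ _ => mem_univ _)
    (fun x _ => ZMod.natCast_zmod_val x) (fun _ hk => ZMod.val_cast_of_lt (mem_range.mp hk))
    (fun x _ => by rw [ZMod.natCast_zmod_val])

theorem prod_range_natCast_add_succ {R : Type*} [CommSemiring R] (x m : ℕ) :
    ∏ i ∈ range m, ((x : R) + ((i : R) + 1)) = m ! * (x + m).choose m := by
  rw [← Nat.cast_mul, ← Nat.ascFactorial_eq_factorial_mul_choose, Nat.ascFactorial_eq_prod_range]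
  push_cast
  exact prod_congr rfl fun i _ => by ring

theorem eval_derivative_prod_X_add_C {R ι : Type*} [CommRing R] [DecidableEq ι] (s : Finset ι)
    (a : ι → R) (x : R) :
    (derivative (∏ i ∈ s, (X + C (a i)))).eval x = ∑ i ∈ s, ∏ j ∈ s.erase i, (x + a j) := by
  simp [derivative_prod_finset, eval_finsetSum, eval_prod]

section Identity

variable {K : Type*} [Field K]

theorem natCast_ne_zero_of_factorial_ne_zero {N k : ℕ} (h : (N ! : K) ≠ 0) (hk : 0 < k)
    (hkN : k ≤ N) : (k : K) ≠ 0 :=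
  ne_zero_of_dvd_ne_zero h (Nat.cast_dvd_cast (Nat.dvd_factorial hk hkN))

theorem sum_range_choose_div_sub_succ_succ (m n : ℕ) :
    ∑ k ∈ range (n + 1), ((m + 1 + k).choose (m + 1) : K) / ((n + 1 : ℕ) - k) =
      ∑ k ∈ range (n + 1), ((m + k).choose m : K) / ((n + 1 : ℕ) - k) +
        ∑ k ∈ range n, ((m + 1 + k).choose (m + 1) : K) / (n - k) := by
  have hpascal : ∀ k, (m + 1 + k).choose (m + 1) = (m + k).choose m + (m + k).choose (m + 1) :=
    fun k => by rw [show m + 1 + k = m + k + 1 by omega, Nat.choose_succ_succ]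
  rw [sum_congr rfl fun k _ => by rw [hpascal k, Nat.cast_add, add_div], sum_add_distrib,
    sum_range_succ' (fun k => ((m + k).choose (m + 1) : K) / ((n + 1 : ℕ) - k))]
  simp only [add_zero, Nat.choose_succ_self, Nat.cast_zero, zero_div]
  congr 1
  refine sum_congr rfl fun k _ => ?_
  rw [show m + (k + 1) = m + 1 + k by omega]
  push_cast
  ring

theorem choose_mul_sum_inv_succ_succ (m n : ℕ) (h : ((m + n + 2)! : K) ≠ 0) :
    ((m + 1 + (n + 1)).choose (m + 1) : K) * ∑ k ∈ range (n + 1), ((m + 1 + k + 1 : ℕ) : K)⁻¹ =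
      ((m + (n + 1)).choose m : K) * ∑ k ∈ range (n + 1), ((m + k + 1 : ℕ) : K)⁻¹ +
        ((m + 1 + n).choose (m + 1) : K) * ∑ k ∈ range n, ((m + 1 + k + 1 : ℕ) : K)⁻¹ := by
  have hm : ((m + 1 : ℕ) : K) ≠ 0 := natCast_ne_zero_of_factorial_ne_zero h (by omega) (by omega)
  have hmn : ((m + n + 2 : ℕ) : K) ≠ 0 := natCast_ne_zero_of_factorial_ne_zero h (by omega) le_rfl
  have hpascal : (m + 1 + (n + 1)).choose (m + 1) =
      (m + (n + 1)).choose m + (m + 1 + n).choose (m + 1) := by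
    rw [show m + 1 + (n + 1) = m + 1 + n + 1 by omega, Nat.choose_succ_succ,
      show m + 1 + n = m + (n + 1) by omega]
  have habs : ((m + (n + 1)).choose m : K) * (m + n + 2 : ℕ) =
      ((m + 1 + (n + 1)).choose (m + 1) : K) * (m + 1 : ℕ) := by
    rw [← Nat.cast_mul, ← Nat.cast_mul, mul_comm, show m + n + 2 = m + (n + 1) + 1 by omega,
      Nat.add_one_mul_choose_eq, show m + (n + 1) + 1 = m + 1 + (n + 1) by omega]
  rw [sum_range_succ' (fun k => ((m + k + 1 : ℕ) : K)⁻¹), sum_range_succ]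
  simp only [show ∀ k, m + (k + 1) + 1 = m + 1 + k + 1 from fun k => by omega,
    show m + 1 + n + 1 = m + n + 2 by omega, add_zero]
  rw [hpascal] at habs ⊢
  field_simp
  push_cast at habs ⊢
  linear_combination -habs

theorem sum_range_choose_div_sub (m n : ℕ) (h : ((m + n)! : K) ≠ 0) :
    ∑ k ∈ range n, ((m + k).choose m : K) / (n - k) =
      (m + n).choose m * ∑ k ∈ range n, ((m + k + 1 : ℕ) : K)⁻¹ := by
  induction m generalizing n with
  | zero =>
    simp only [zero_add, Nat.choose_zero_right, Nat.cast_one, one_div, one_mul]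
    rw [← sum_range_reflect]
    refine sum_congr rfl fun k hk => ?_
    have hn : ((n - 1 - k : ℕ) : K) + (k + 1) = n := by
      rw [← Nat.cast_succ, ← Nat.cast_add]
      congr 1
      simp only [mem_range] at hk
      omega
    rw [← hn]
    push_cast
    ring
  | succ m ihm =>
    have hfac : ∀ {a b : ℕ}, a ≤ b → (b ! : K) ≠ 0 → (a ! : K) ≠ 0 := fun hab hb =>
      ne_zero_of_dvd_ne_zero hb (Nat.cast_dvd_cast (Nat.factorial_dvd_factorial hab))
    induction n with
    | zero => simp
    | succ n ihn =>
      rw [sum_range_choose_div_sub_succ_succ, ihm (n + 1) (hfac (by omega) h),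
        ihn (hfac (by omega) h), choose_mul_sum_inv_succ_succ m n (hfac (by omega) h)]

end Identity

namespace ZMod

variable {p : ℕ} [Fact p.Prime]

theorem natCast_factorial_ne_zero {n : ℕ} (hn : n < p) : (n ! : ZMod p) ≠ 0 := by
  rw [Ne, ZMod.natCast_eq_zero_iff, (Fact.out : p.Prime).dvd_factorial]
  omega

theorem sum_range_choose_div_sub_eq (m : ℕ) (hm : 2 * m < p) (hp : 2 < p) :
    ∑ k ∈ range p, ((m + k).choose m : ZMod p) / (k - m) =
      -((m + m).choose m * ∑ i ∈ range m, ((m + i + 1 : ℕ) : ZMod p)⁻¹) := by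
  set f : (ZMod p)[X] := ∏ i ∈ range m, (X + C ((i : ZMod p) + 1))
  have hdeg : f.natDegree < Fintype.card (ZMod p) := by
    rw [natDegree_prod_of_monic _ _ fun i _ => monic_X_add_C _, ZMod.card]
    simp only [natDegree_X_add_C, sum_const, card_range, smul_eq_mul, mul_one]
    omega
  have heval : ∀ k : ℕ, f.eval (k : ZMod p) / (k - m) =
      m ! * (((m + k).choose m : ZMod p) / (k - m)) := by
    intro k
    simp only [f, eval_prod, eval_add, eval_X, eval_C, prod_range_natCast_add_succ, add_comm k m]
    ring
  have hderiv : (derivative f).eval (m : ZMod p) =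
      m ! * ((m + m).choose m * ∑ i ∈ range m, ((m + i + 1 : ℕ) : ZMod p)⁻¹) := by
    rw [eval_derivative_prod_X_add_C, mul_sum, mul_sum]
    refine sum_congr rfl fun i hi => ?_
    have hi0 : ((m + i + 1 : ℕ) : ZMod p) ≠ 0 := natCast_ne_zero_of_factorial_ne_zero
      (natCast_factorial_ne_zero (by omega : m + m < p)) (by omega) (by simp only [mem_range] at hi; omega)
    rw [eq_comm, ← mul_assoc, ← prod_range_natCast_add_succ, ← mul_prod_erase _ _ hi]
    field_simp
    push_cast
    ring
  have htotal := FiniteField.sum_eval_div_sub_eq_neg_derivative_eval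
    (by rw [ZMod.card]; omega) f hdeg (m : ZMod p)
  rw [ZMod.sum_univ_eq_sum_range] at htotal
  simp only [heval, ← mul_sum, hderiv] at htotal
  exact mul_left_cancel₀ (natCast_factorial_ne_zero (by omega)) (htotal.trans (mul_neg _ _).symm)

theorem sum_Icc_choose_div_sub_eq_zero (m : ℕ) (hm : 2 * m + 2 < p) :
    ∑ k ∈ Icc (m + 1) (p - m - 1), ((m + k).choose k : ZMod p) / (k - m) = 0 := by
  set term : ℕ → ZMod p := fun k => ((m + k).choose m : ZMod p) / (k - m)
  have hsplit : ∑ k ∈ range p, term k = (∑ k ∈ range m, term k + term m) +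
      ∑ k ∈ Icc (m + 1) (p - m - 1), term k + ∑ k ∈ Ico (p - m) p, term k := by
    rw [← sum_range_succ, show Icc (m + 1) (p - m - 1) = Ico (m + 1) (p - m) by ext; simp only [mem_Icc, mem_Ico]; omega,
      sum_range_add_sum_Ico _ (by omega), sum_range_add_sum_Ico _ (by omega)]
  have hhead : ∑ k ∈ range m, term k =
      -((m + m).choose m * ∑ i ∈ range m, ((m + i + 1 : ℕ) : ZMod p)⁻¹) := by
    rw [← sum_range_choose_div_sub m m (natCast_factorial_ne_zero (by omega)),
      ← sum_neg_distrib]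
    refine sum_congr rfl fun k _ => ?_
    simp only [term]
    rw [← neg_div_neg_eq, neg_sub, neg_div]
  have hmid : term m = 0 := by simp [term]
  have htail : ∑ k ∈ Ico (p - m) p, term k = 0 := by
    refine sum_eq_zero fun k hk => ?_
    simp only [mem_Ico] at hk
    have hdvd : p ∣ (m + k).choose m :=
      (Fact.out : p.Prime).dvd_choose_add (by omega) hk.2 (by omega)
    simp [term, (ZMod.natCast_eq_zero_iff _ _).mpr hdvd]
  have htotal := sum_range_choose_div_sub_eq m (p := p) (by omega) (by omega)
  rw [hsplit, hhead, hmid, htail] at htotal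
  rw [sum_congr rfl fun k _ => by rw [← Nat.choose_symm_add]]
  linear_combination htotal

end ZMod

namespace PadicInt

variable {p : ℕ} [Fact p.Prime]

theorem map_inv_of_norm_eq_one {K : Type*} [DivisionRing K] (f : ℤ_[p] →+* K) {z : ℤ_[p]}
    (hz : ‖z‖ = 1) : f z.inv = (f z)⁻¹ :=
  eq_inv_of_mul_eq_one_right (by rw [← map_mul, mul_inv hz, map_one])

theorem norm_le_inv_of_toZMod_eq_zero {x : ℤ_[p]} (hx : toZMod x = 0) : ‖x‖ ≤ (p : ℝ)⁻¹ := by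
  have hlt : ‖x‖ < 1 := by
    rw [← mem_nonunits, ← IsLocalRing.mem_maximalIdeal, ← ker_toZMod]
    exact hx
  simpa using (norm_le_pow_iff_norm_lt_pow_add_one x (-1)).mpr (by simpa using hlt)

end PadicInt

theorem Padic.norm_sum_div_le_inv_of_sum_div_eq_zero {p : ℕ} [Fact p.Prime] {ι : Type*}
    (s : Finset ι) (a d : ι → ℤ) (hd : ∀ i ∈ s, ¬ (p : ℤ) ∣ d i)
    (h : ∑ i ∈ s, (a i : ZMod p) / d i = 0) :
    ‖((∑ i ∈ s, (a i : ℚ) / d i : ℚ) : ℚ_[p])‖ ≤ (p : ℝ)⁻¹ := by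
  have hunit : ∀ i ∈ s, ‖(d i : ℤ_[p])‖ = 1 := fun i hi => by
    rw [PadicInt.norm_intCast_eq_one_iff, isCoprime_comm,
      (Nat.prime_iff_prime_int.mp Fact.out).coprime_iff_not_dvd]
    exact hd i hi
  set z : ℤ_[p] := ∑ i ∈ s, a i * (d i : ℤ_[p]).inv
  have hz : (z : ℚ_[p]) = ((∑ i ∈ s, (a i : ℚ) / d i : ℚ) : ℚ_[p]) := by
    rw [PadicInt.coe_sum, Rat.cast_sum]
    refine sum_congr rfl fun i hi => ?_
    change PadicInt.Coe.ringHom ((a i : ℤ_[p]) * (d i : ℤ_[p]).inv) = _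
    rw [map_mul, PadicInt.map_inv_of_norm_eq_one _ (hunit i hi), map_intCast, map_intCast]
    push_cast
    rw [div_eq_mul_inv]
  have hz0 : PadicInt.toZMod z = 0 := by
    rw [← h, map_sum]
    refine sum_congr rfl fun i hi => ?_
    rw [map_mul, PadicInt.map_inv_of_norm_eq_one _ (hunit i hi), map_intCast, map_intCast,
      div_eq_mul_inv]
  rw [← hz, ← PadicInt.norm_def]
  exact PadicInt.norm_le_inv_of_toZMod_eq_zero hz0

/-- Let `p` be an odd prime and `m < (p-1)/2` a nonnegative integer. Then
`∑_{k=m+1}^{p-m-1} C(m+k,k)/(k-m) ≡ 0 (mod p)` as a congruence of `p`-integral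
rationals. -/
theorem stmt18 (p : ℕ) [Fact p.Prime] (hp : Odd p) (m : ℕ) (hm : m < (p - 1) / 2) :
    ‖(((∑ k ∈ Finset.Icc (m + 1) (p - m - 1),
            ((m + k).choose k : ℚ) / ((k : ℚ) - (m : ℚ))) : ℚ) : ℚ_[p])‖
      ≤ (p : ℝ)⁻¹ := by
  have hmp : 2 * m + 2 < p := by
    obtain ⟨w, rfl⟩ := hp
    omega
  have hd : ∀ k ∈ Icc (m + 1) (p - m - 1), ¬ (p : ℤ) ∣ (k : ℤ) - m := fun k hk => by
    simp only [mem_Icc] at hk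
    rw [← Nat.cast_sub (by omega), Int.natCast_dvd_natCast]
    exact fun h => absurd (Nat.le_of_dvd (by omega) h) (by omega)
  have hnorm := Padic.norm_sum_div_le_inv_of_sum_div_eq_zero _ (fun k => ((m + k).choose k : ℤ))
    (fun k => (k : ℤ) - m) hd (by push_cast; exact ZMod.sum_Icc_choose_div_sub_eq_zero m hmp)
  exact_mod_cast hnorm
end
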